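/- The constant 1/2 in the lower bound of the generalised trapezoid inequality for convex functions is sharp: for every constant C > 1/2 there exist real numbers a < b, a convex function f : [a,b] → ℝ, and a point x ∈ (a,b) such that C·[ (b−x)²·f′₊(x) − (x−a)²·f′₋(x) ] > (x−a)·f(a) + (b−x)·f(b) − ∫_a^b f(t) dt. (Indeed f(t) = |t − (a+b)/2| and x = (a+b)/2 witness this.) -/
import Mathlib

open MeasureTheory Set intervalIntegral

/-- **Sharpness of the constant `1/2`** in the lower bound of the generalised
trapezoid inequality for convex functions: no constant `C > 1/2` works. -/
theorem trapezoid_convex_lower_bound_sharp (C : ℝ) (hC : 1 / 2 < C) :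
    ∃ a b : ℝ, a < b ∧ ∃ f : ℝ → ℝ, ConvexOn ℝ (Set.Icc a b) f ∧
      ∃ x ∈ Set.Ioo a b, ∃ fdp fdm : ℝ,
        HasDerivWithinAt f fdp (Set.Ici x) x ∧
        HasDerivWithinAt f fdm (Set.Iic x) x ∧
        C * ((b - x) ^ 2 * fdp - (x - a) ^ 2 * fdm) >
          (x - a) * f a + (b - x) * f b - ∫ t in a..b, f t := by
  refine ⟨-1, 1, by norm_num, fun t => |t|, (convexOn_norm (convex_Icc _ _)), 0, by norm_num, 1, -1, ?_, ?_, ?_⟩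
  · have : HasDerivWithinAt (fun t : ℝ => t) 1 (Set.Ici 0) 0 := (hasDerivAt_id 0).hasDerivWithinAt
    exact this.congr (fun t ht => abs_of_nonneg ht) (by simp)
  · have : HasDerivWithinAt (fun t : ℝ => -t) (-1) (Set.Iic 0) 0 := ((hasDerivAt_id 0).neg).hasDerivWithinAt
    exact this.congr (fun t ht => abs_of_nonpos ht) (by simp)
  · have h1 : (∫ t in (-1:ℝ)..1, |t|) = 1 := by
      rw [← intervalIntegral.integral_add_adjacent_intervals (a := (-1:ℝ)) (b := 0) (c := 1)
        (continuous_abs.intervalIntegrable _ _) (continuous_abs.intervalIntegrable _ _)]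
      have e1 : (∫ t in (-1:ℝ)..0, |t|) = ∫ t in (-1:ℝ)..0, -t := by
        apply intervalIntegral.integral_congr
        intro t ht
        rw [Set.uIcc_of_le (by norm_num)] at ht
        simp [abs_of_nonpos ht.2]
      have e2 : (∫ t in (0:ℝ)..1, |t|) = ∫ t in (0:ℝ)..1, t := by
        apply intervalIntegral.integral_congr
        intro t ht
        rw [Set.uIcc_of_le (by norm_num)] at ht
        simp [abs_of_nonneg ht.1]
      rw [e1, e2, intervalIntegral.integral_neg, integral_id, integral_id]
      norm_num
    rw [h1]
    simp only [abs_neg, abs_one]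
    nlinarith
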